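/- Let (M, m₀) and (Y, y₀) be pointed topological spaces and A an abelian group regarded as a discrete space. For every pointed continuous map f : M → Y, the induced map Sym(f;A) : Sym(M;A) → Sym(Y;A), sending a finitely supported labeling l to the function y ↦ Σ_{x ∈ f⁻¹(y)} l(x) for y ≠ y₀ and 0 at y₀, is a well-defined pointed continuous map. Moreover this assignment is functorial: Sym(id_M;A) = id and Sym(g ∘ f;A) = Sym(g;A) ∘ Sym(f;A) for pointed continuous maps f : M → Y and g : Y → Z. -/
import Mathlib


/-- Underlying set of the infinite symmetric product: finitely supported
labelings of `M` by `A` vanishing at the basepoint `m₀`. -/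
def SymProd (M : Type) (A : Type) [AddCommGroup A] (m₀ : M) : Type := {l : M →₀ A // l m₀ = 0}

/-- The structure maps `Mⁿ × Aⁿ → SymProd(M;A)`. -/
noncomputable def symF (M : Type) (A : Type) [AddCommGroup A] (m₀ : M) (n : ℕ)
    (c : Fin n → M) (a : Fin n → A) : SymProd M A m₀ :=
  ⟨(∑ i, Finsupp.single (c i) (a i)) - Finsupp.single m₀ ((∑ i, Finsupp.single (c i) (a i)) m₀),
    by simp⟩

/-- The topology on `SymProd(M;A)`: the finest topology making all structure maps
continuous, where `Mⁿ` has the product topology and `Aⁿ` the product of discrete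
topologies. -/
noncomputable instance symTop (M : Type) [TopologicalSpace M] (A : Type) [AddCommGroup A]
    (m₀ : M) : TopologicalSpace (SymProd M A m₀) :=
  ⨆ n : ℕ, TopologicalSpace.coinduced
    (fun p : (Fin n → M) × (Fin n → A) => symF M A m₀ n p.1 p.2)
    (@instTopologicalSpaceProd _ _ inferInstance
      (@Pi.topologicalSpace (Fin n) (fun _ => A) (fun _ => ⊥)))

/-- The basepoint of `SymProd(M;A)`: the zero labeling. -/
def symZero (M : Type) (A : Type) [AddCommGroup A] (m₀ : M) : SymProd M A m₀ := ⟨0, by simp⟩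

/-- The pushforward `SymProd(f;A)` of a pointed map `f`. -/
noncomputable def symMap {M Y : Type} (A : Type) [AddCommGroup A] (f : M → Y)
    (m₀ : M) (y₀ : Y) (l : SymProd M A m₀) : SymProd Y A y₀ :=
  ⟨Finsupp.mapDomain f l.1 - Finsupp.single y₀ (Finsupp.mapDomain f l.1 y₀), by simp⟩

/-- Pointed homotopy of pointed maps. -/
def PtdHomotopic {X Y : Type} [TopologicalSpace X] [TopologicalSpace Y]
    (x₀ : X) (y₀ : Y) (f g : X → Y) : Prop :=
  ∃ H : X × unitInterval → Y, Continuous H ∧ (∀ x, H (x, 0) = f x) ∧ (∀ x, H (x, 1) = g x) ∧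
    ∀ t, H (x₀, t) = y₀

open Topology

lemma Finsupp.mapDomain_sub' {α β A : Type} [AddCommGroup A] (f : α → β)
    (x y : α →₀ A) :
    Finsupp.mapDomain f (x - y) = Finsupp.mapDomain f x - Finsupp.mapDomain f y :=
  map_sub (Finsupp.mapDomain.addMonoidHom f) x y

lemma symMap_symF {M Y : Type} (A : Type) [AddCommGroup A] (f : M → Y)
    (m₀ : M) (y₀ : Y) (hf : f m₀ = y₀) (n : ℕ) (c : Fin n → M) (a : Fin n → A) :
    symMap A f m₀ y₀ (symF M A m₀ n c a) = symF Y A y₀ n (f ∘ c) a := by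
  apply Subtype.ext
  simp only [symMap, symF]
  rw [Finsupp.mapDomain_sub', Finsupp.mapDomain_single, hf]
  have hs : Finsupp.mapDomain f (∑ i, Finsupp.single (c i) (a i))
      = ∑ i, Finsupp.single (f (c i)) (a i) := by
    rw [Finsupp.mapDomain_finset_sum]
    simp [Finsupp.mapDomain_single]
  rw [hs]
  simp [Function.comp]

lemma symMap_apply {M Y : Type} (A : Type) [AddCommGroup A] (f : M → Y)
    (m₀ : M) (y₀ : Y) (l : SymProd M A m₀) :
    (symMap A f m₀ y₀ l).1 =
      Finsupp.mapDomain f l.1 - Finsupp.single y₀ (Finsupp.mapDomain f l.1 y₀) := rfl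

/-- For a pointed continuous map `f : (M,m₀) → (Y,y₀)` the induced map
`Sym(f;A)` is a well-defined pointed continuous map, and the assignment is functorial:
`Sym(id;A) = id` and `Sym(g ∘ f;A) = Sym(g;A) ∘ Sym(f;A)`. -/
theorem symMap_continuous_pointed_functorial
    (M Y Z : Type) [TopologicalSpace M] [TopologicalSpace Y] [TopologicalSpace Z]
    (A : Type) [AddCommGroup A] (m₀ : M) (y₀ : Y) (z₀ : Z) :
    (∀ f : M → Y, Continuous f → f m₀ = y₀ →
      Continuous (symMap A f m₀ y₀) ∧ symMap A f m₀ y₀ (symZero M A m₀) = symZero Y A y₀) ∧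
    (symMap A id m₀ m₀ = id) ∧
    (∀ (f : M → Y) (g : Y → Z), Continuous f → f m₀ = y₀ → Continuous g → g y₀ = z₀ →
      symMap A (g ∘ f) m₀ z₀ = symMap A g y₀ z₀ ∘ symMap A f m₀ y₀) := by
  refine ⟨fun f hf hf0 => ⟨?_, ?_⟩, ?_, ?_⟩
  · -- continuity
    rw [symTop, continuous_iSup_dom]
    intro n
    rw [continuous_coinduced_dom]
    letI : TopologicalSpace A := ⊥
    have key : (symMap A f m₀ y₀ ∘ fun p : (Fin n → M) × (Fin n → A) =>
        symF M A m₀ n p.1 p.2) =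
        (fun p : (Fin n → Y) × (Fin n → A) => symF Y A y₀ n p.1 p.2) ∘
          (fun p : (Fin n → M) × (Fin n → A) => (f ∘ p.1, p.2)) := by
      funext p
      exact symMap_symF A f m₀ y₀ hf0 n p.1 p.2
    rw [key]
    have hφ : Continuous (fun p : (Fin n → M) × (Fin n → A) =>
        ((f ∘ p.1, p.2) : (Fin n → Y) × (Fin n → A))) :=
      (continuous_pi fun i => hf.comp ((continuous_apply i).comp
        continuous_fst)).prodMk continuous_snd
    have h1 : Continuous (fun p : (Fin n → Y) × (Fin n → A) => symF Y A y₀ n p.1 p.2) :=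
      continuous_iSup_rng (i := n) continuous_coinduced_rng
    exact h1.comp hφ
  · -- pointedness
    apply Subtype.ext
    simp [symMap, symZero]
  · -- identity
    funext l
    apply Subtype.ext
    simp [symMap, Finsupp.mapDomain_id, l.2]
  · -- composition
    intro f g hf hf0 hg hg0
    funext l
    apply Subtype.ext
    simp only [Function.comp_apply, symMap_apply]
    rw [Finsupp.mapDomain_comp, Finsupp.mapDomain_sub', Finsupp.mapDomain_single, hg0]
    set T := Finsupp.mapDomain g (Finsupp.mapDomain f l.1)
    simp
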